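/- Let P be a finite nonempty partially ordered set, let w : P → ℝ be an injective weight function, and let x ∈ P. Suppose w' : P → ℝ is another injective weight function with w'(y) = w(y) for all y ≠ x and w'(x) ≤ w(x). If x is the greedy maximum of (P, w), then x is the greedy maximum of (P, w'). (In words: decreasing the weight of an element can only help it be the terminal point of the greedy chain.) -/
import Mathlib


open MeasureTheory Finset Function
open scoped Classical ENNReal

/-- The element of the finset `s` with minimum weight. -/
noncomputable def argminOn {α : Type*} (w : α → ℝ) (s : Finset α) (h : s.Nonempty) : α :=
  (s.exists_min_image w h).choose

/-- One step of the greedy chain: if `x` is not maximal, move to the element of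
minimum weight among those strictly above `x`; otherwise stay at `x`. -/
noncomputable def greedyStep {α : Type*} [PartialOrder α] [Fintype α] (w : α → ℝ) (x : α) : α :=
  if h : (Finset.univ.filter fun y => x < y).Nonempty then argminOn w _ h else x

/-- The greedy maximum of a finite nonempty partially ordered set with weights `w`:
start at the element of minimum weight and iterate `greedyStep` until stabilization
(`Fintype.card α` iterations suffice). -/
noncomputable def greedyMax {α : Type*} [PartialOrder α] [Fintype α] [Nonempty α]
    (w : α → ℝ) : α :=
  (greedyStep w)^[Fintype.card α] (argminOn w Finset.univ Finset.univ_nonempty)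

/-- `x` belongs to `s` and is the greedy maximum of the partial order induced on `s`,
with the weights `w` restricted to `s`. -/
def IsGreedyMaxOn {α : Type*} [PartialOrder α] [Fintype α]
    (w : α → ℝ) (s : Set α) (x : α) : Prop :=
  ∃ hx : x ∈ s,
    haveI : Nonempty s := ⟨⟨x, hx⟩⟩
    greedyMax (fun y : s => w y.1) = ⟨x, hx⟩

/-- `x` is *tagged*: it is the greedy maximum (w.r.t. the weights `w`) of the induced
partial order on the set of elements arriving no later than `x`. -/
def Tagged {α : Type*} [PartialOrder α] [Fintype α] (T w : α → ℝ) (x : α) : Prop :=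
  IsGreedyMaxOn w {y | T y ≤ T x} x

/-- The strategy accepts `x`: `x` is tagged, arrives after time `1/e`, and no other
element is tagged with arrival time in `(1/e, T x)`. -/
def Accepts {α : Type*} [PartialOrder α] [Fintype α] (T w : α → ℝ) (x : α) : Prop :=
  Tagged T w x ∧ 1 / Real.exp 1 < T x ∧
    ∀ y, Tagged T w y → 1 / Real.exp 1 < T y → T x ≤ T y

/-- The probability that `x` is the greedy maximum of `P` when the weights are
independent and uniform on `[0,1]`. -/
noncomputable def muGreedy (P : Type) [Fintype P] [PartialOrder P] (x : P) : ℝ≥0∞ :=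
  (Measure.pi fun _ : P => volume.restrict (Set.Icc (0:ℝ) 1)) {w | IsGreedyMaxOn w Set.univ x}

/-- The conditional probability that `x` is the greedy maximum of `P`, given `W x ≤ t`,
when the weights are independent and uniform on `[0,1]`. -/
noncomputable def muGreedyCond (P : Type) [Fintype P] [PartialOrder P] (t : ℝ) (x : P) : ℝ≥0∞ :=
  (Measure.pi fun _ : P => volume.restrict (Set.Icc (0:ℝ) 1))
      {w | IsGreedyMaxOn w Set.univ x ∧ w x ≤ t} /
    (Measure.pi fun _ : P => volume.restrict (Set.Icc (0:ℝ) 1)) {w | w x ≤ t}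

lemma argminOn_mem {α : Type*} (w : α → ℝ) (s : Finset α) (h : s.Nonempty) :
    argminOn w s h ∈ s := (s.exists_min_image w h).choose_spec.1

lemma argminOn_le {α : Type*} (w : α → ℝ) (s : Finset α) (h : s.Nonempty)
    {y : α} (hy : y ∈ s) : w (argminOn w s h) ≤ w y :=
  (s.exists_min_image w h).choose_spec.2 y hy

lemma greedyStep_le {α : Type*} [PartialOrder α] [Fintype α] (w : α → ℝ) (z : α) :
    z = greedyStep w z ∨ z < greedyStep w z := by
  rw [greedyStep]
  split_ifs with h
  · right
    have := argminOn_mem w _ h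
    exact (Finset.mem_filter.mp this).2
  · left; rfl

lemma iterate_card_fixed {α : Type*} [PartialOrder α] [Fintype α] (f : α → α)
    (hf : ∀ z, z = f z ∨ z < f z) (z : α) :
    f (f^[Fintype.card α] z) = f^[Fintype.card α] z := by
  have hmono : Monotone fun n => f^[n] z := by
    apply monotone_nat_of_le_succ
    intro n
    rw [Function.iterate_succ_apply']
    rcases hf (f^[n] z) with h | h
    · exact h.le
    · exact h.le
  obtain ⟨a, b, hab, heq⟩ := Fintype.exists_ne_map_eq_of_card_lt
    (fun i : Fin (Fintype.card α + 1) => f^[(i : ℕ)] z) (by simp)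
  wlog hlt : (a : ℕ) < (b : ℕ) generalizing a b
  · exact this b a hab.symm heq.symm (by omega)
  have hfix : f (f^[(a : ℕ)] z) = f^[(a : ℕ)] z := by
    have h1 : f^[(a : ℕ)] z ≤ f^[(a : ℕ) + 1] z := hmono (Nat.le_succ _)
    have h2 : f^[(a : ℕ) + 1] z ≤ f^[(b : ℕ)] z := hmono hlt
    have : f^[(a : ℕ) + 1] z = f^[(a : ℕ)] z := le_antisymm (heq ▸ h2) h1
    rwa [Function.iterate_succ_apply'] at this
  have ha : (a : ℕ) ≤ Fintype.card α := Nat.lt_succ_iff.mp a.isLt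
  have key : f^[Fintype.card α] z = f^[(a : ℕ)] z := by
    conv_lhs => rw [show Fintype.card α = (Fintype.card α - (a : ℕ)) + (a : ℕ) by omega]
    rw [Function.iterate_add_apply]
    exact Function.iterate_fixed hfix _
  rw [key, hfix]

/-- Decreasing the weight of a single element can only help it be the
greedy maximum: if `w'` agrees with `w` away from `x` and `w' x ≤ w x`, and `x` is the
greedy maximum of `(P, w)`, then `x` is the greedy maximum of `(P, w')`. -/
theorem greedy_max_decrease_weight (P : Type) [Fintype P] [PartialOrder P] [Nonempty P]
    (w w' : P → ℝ) (hw : Function.Injective w) (hw' : Function.Injective w')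
    (x : P) (hagree : ∀ y : P, y ≠ x → w' y = w y) (hle : w' x ≤ w x)
    (hgreedy : greedyMax w = x) :
    greedyMax w' = x := by
  classical
  -- `x` is maximal
  have hxfix : greedyStep w x = x := by
    have := iterate_card_fixed (greedyStep w) (greedyStep_le w)
      (argminOn w Finset.univ Finset.univ_nonempty)
    rwa [show (greedyStep w)^[Fintype.card P]
        (argminOn w Finset.univ Finset.univ_nonempty) = greedyMax w from rfl, hgreedy] at this
  have hxmax : ¬ (Finset.univ.filter fun y => x < y).Nonempty := by
    intro h
    rw [greedyStep, dif_pos h] at hxfix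
    have := (Finset.mem_filter.mp (argminOn_mem w _ h)).2
    rw [hxfix] at this
    exact lt_irrefl x this
  have hxfix' : greedyStep w' x = x := by rw [greedyStep, dif_neg hxmax]
  -- comparison of argmins
  have hcmp : ∀ (s : Finset P) (h : s.Nonempty),
      argminOn w' s h ≠ x → argminOn w' s h = argminOn w s h := by
    intro s h hne
    have hmin : ∀ y ∈ s, w (argminOn w' s h) ≤ w y := by
      intro y hy
      rcases eq_or_ne y x with rfl | hyx
      · calc w (argminOn w' s h) = w' (argminOn w' s h) := (hagree _ hne).symm
          _ ≤ w' y := argminOn_le w' s h hy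
          _ ≤ w y := hle
      · rw [← hagree _ hne, ← hagree y hyx]
        exact argminOn_le w' s h hy
    exact hw (le_antisymm (hmin _ (argminOn_mem w s h))
      (argminOn_le w s h (argminOn_mem w' s h)))
  -- the w'-chain tracks the w-chain or jumps to x
  have main : ∀ i : ℕ,
      (greedyStep w')^[i] (argminOn w' Finset.univ Finset.univ_nonempty) =
        (greedyStep w)^[i] (argminOn w Finset.univ Finset.univ_nonempty) ∨
      (greedyStep w')^[i] (argminOn w' Finset.univ Finset.univ_nonempty) = x := by
    intro i
    induction i with
    | zero =>
      simp only [Function.iterate_zero, id]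
      by_cases hz : argminOn w' Finset.univ Finset.univ_nonempty = x
      · exact Or.inr hz
      · exact Or.inl (hcmp _ _ hz)
    | succ n ih =>
      rw [Function.iterate_succ_apply', Function.iterate_succ_apply']
      rcases ih with heq | hx
      · rw [heq]
        set z := (greedyStep w)^[n] (argminOn w Finset.univ Finset.univ_nonempty) with hz
        by_cases hfil : (Finset.univ.filter fun y => z < y).Nonempty
        · rw [greedyStep, dif_pos hfil, greedyStep, dif_pos hfil]
          by_cases hax : argminOn w' _ hfil = x
          · exact Or.inr hax
          · exact Or.inl (hcmp _ hfil hax)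
        · rw [greedyStep, dif_neg hfil, greedyStep, dif_neg hfil]
          exact Or.inl rfl
      · rw [hx, hxfix']
        exact Or.inr rfl
  rcases main (Fintype.card P) with h | h
  · rw [greedyMax, h]; exact hgreedy
  · exact h
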